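/- arXiv:2007.13319 — 2 statements merged into one kernel-verified Lean document; each statement's English description precedes it below -/
import Mathlib

section
/- Suppose f, g, φ, ψ are vectors in a Hilbert space such that f⊗g + φ⊗ψ is self-adjoint. Then {f, g} is linearly dependent if and only if {φ, ψ} is linearly dependent. -/
open scoped InnerProductSpace

/-!
Self-adjointness of `f ⊗ g + φ ⊗ ψ` says that the skew-adjoint operators `f ⊗ g - g ⊗ f` and
`φ ⊗ ψ - ψ ⊗ φ` are negatives of each other, so they have the same range. The range of
`u ⊗ v - v ⊗ u : x ↦ ⟨x, v⟩ u - ⟨x, u⟩ v` lies in a line exactly when `u` and `v` are dependent: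
if `v ∉ ℂ u`, a vector orthogonal to `u` but not to `v` is sent to a nonzero multiple of `u`, and
symmetrically, so the line would contain both `u` and `v`.
-/

noncomputable section

/-- The rank-one operator `f ⊗ g` on a Hilbert space, acting by `h ↦ ⟨h, g⟩ f = ⟪g, h⟫_ℂ • f`
(inner products are conjugate-linear in the second entry of `⟨·,·⟩`). -/
def rankOne {H : Type*} [NormedAddCommGroup H] [InnerProductSpace ℂ H] (f g : H) :
    H →L[ℂ] H := (innerSL ℂ g).smulRight f

theorem exists_eq_smul_or_eq_smul_of_mem_span_singleton {K M : Type*} [Field K] [AddCommGroup M]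
    [Module K M] {u v w : M} (hu : u ∈ K ∙ w) (hv : v ∈ K ∙ w) :
    ∃ c : K, u = c • v ∨ v = c • u := by
  obtain ⟨a, rfl⟩ := Submodule.mem_span_singleton.1 hu
  obtain ⟨b, rfl⟩ := Submodule.mem_span_singleton.1 hv
  rcases eq_or_ne a 0 with rfl | ha
  · exact ⟨0, .inl (by simp)⟩
  · exact ⟨b / a, .inr (by rw [smul_smul, div_mul_cancel₀ _ ha])⟩

theorem exists_inner_eq_zero_and_inner_ne_zero {𝕜 E : Type*} [RCLike 𝕜] [NormedAddCommGroup E]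
    [InnerProductSpace 𝕜 E] {u v : E} (hv : v ∉ 𝕜 ∙ u) :
    ∃ x, ⟪u, x⟫_𝕜 = 0 ∧ ⟪v, x⟫_𝕜 ≠ 0 := by
  rw [← (𝕜 ∙ u).orthogonal_orthogonal, Submodule.mem_orthogonal] at hv
  push Not at hv
  obtain ⟨x, hx, hxv⟩ := hv
  exact ⟨x, Submodule.mem_orthogonal_singleton_iff_inner_right.1 hx,
    fun h => hxv (by rw [← inner_conj_symm, h, map_zero])⟩

section

variable {H : Type*} [NormedAddCommGroup H] [InnerProductSpace ℂ H]

@[simp]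
theorem rankOne_apply (u v x : H) : rankOne u v x = ⟪v, x⟫_ℂ • u := rfl

theorem adjoint_rankOne [CompleteSpace H] (u v : H) :
    ContinuousLinearMap.adjoint (rankOne u v) = rankOne v u := by
  refine ((ContinuousLinearMap.eq_adjoint_iff _ _).2 fun x y => ?_).symm
  simp [inner_smul_left, inner_smul_right, mul_comm]

theorem range_rankOne_sub_rankOne_le (u v : H) :
    LinearMap.range ((rankOne u v - rankOne v u : H →L[ℂ] H) : H →ₗ[ℂ] H) ≤
      (ℂ ∙ u) ⊔ (ℂ ∙ v) := by
  rintro _ ⟨x, rfl⟩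
  exact sub_mem
    (Submodule.mem_sup_left (Submodule.smul_mem _ _ (Submodule.mem_span_singleton_self u)))
    (Submodule.mem_sup_right (Submodule.smul_mem _ _ (Submodule.mem_span_singleton_self v)))

theorem exists_eq_smul_or_eq_smul_iff_range_rankOne_sub_rankOne_le_span (u v : H) :
    (∃ c : ℂ, u = c • v ∨ v = c • u) ↔
      ∃ w, LinearMap.range ((rankOne u v - rankOne v u : H →L[ℂ] H) : H →ₗ[ℂ] H) ≤ ℂ ∙ w := by
  constructor
  · rintro ⟨c, rfl | rfl⟩
    · exact ⟨v, (range_rankOne_sub_rankOne_le _ _).trans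
        (sup_le (Submodule.span_singleton_smul_le _ _ _) le_rfl)⟩
    · exact ⟨u, (range_rankOne_sub_rankOne_le _ _).trans
        (sup_le le_rfl (Submodule.span_singleton_smul_le _ _ _))⟩
  rintro ⟨w, hw⟩
  by_contra hdep
  have hA : ∀ x, (rankOne u v - rankOne v u) x ∈ ℂ ∙ w := fun x => hw ⟨x, rfl⟩
  have hvu : v ∉ ℂ ∙ u := fun h =>
    hdep <| (Submodule.mem_span_singleton.1 h).imp fun _ ha => .inr ha.symm
  have huv : u ∉ ℂ ∙ v := fun h =>
    hdep <| (Submodule.mem_span_singleton.1 h).imp fun _ ha => .inl ha.symm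
  obtain ⟨x, hux, hvx⟩ := exists_inner_eq_zero_and_inner_ne_zero hvu
  have hu : u ∈ ℂ ∙ w := (Submodule.smul_mem_iff _ hvx).1 (by simpa [hux] using hA x)
  obtain ⟨y, hvy, huy⟩ := exists_inner_eq_zero_and_inner_ne_zero huv
  have hv : v ∈ ℂ ∙ w := (Submodule.smul_mem_iff _ huy).1 (by simpa [hvy] using hA y)
  exact hdep (exists_eq_smul_or_eq_smul_of_mem_span_singleton hu hv)

end

/-- If `f ⊗ g + φ ⊗ ψ` is self-adjoint, then `{f, g}` is linearly dependent
(one is a scalar multiple of the other) iff `{φ, ψ}` is. -/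
theorem rankOne_add_rankOne_selfAdjoint_dep_iff {H : Type*} [NormedAddCommGroup H]
    [InnerProductSpace ℂ H] [CompleteSpace H] (f g φ ψ : H)
    (h : IsSelfAdjoint (rankOne f g + rankOne φ ψ)) :
    (∃ c : ℂ, f = c • g ∨ g = c • f) ↔ (∃ c : ℂ, φ = c • ψ ∨ ψ = c • φ) := by
  have hsymm := h.star_eq
  rw [ContinuousLinearMap.star_eq_adjoint, map_add, adjoint_rankOne, adjoint_rankOne] at hsymm
  have hskew : rankOne φ ψ - rankOne ψ φ = -(rankOne f g - rankOne g f) := by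
    rw [neg_sub, sub_eq_sub_iff_add_eq_add, hsymm, add_comm]
  rw [exists_eq_smul_or_eq_smul_iff_range_rankOne_sub_rankOne_le_span,
    exists_eq_smul_or_eq_smul_iff_range_rankOne_sub_rankOne_le_span, hskew,
    ContinuousLinearMap.toLinearMap_neg, LinearMap.range_neg]

end
end

section
/- For f, g ∈ L^∞(T), the operator T_{z̄} T_f T_g T_z − T_f T_g is a rank-one operator; explicitly, it equals (V H_{f̄} 1) ⊗ (V H_g 1), where V is the anti-unitary operator on L² given by (Vh)(w) = w̄ · conj(h(w)). -/
/-!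
Everything is computed on Fourier coefficients `coeff n = ⟪e_n, ·⟫`, where `T_z`, `T_{z̄}` act as
shifts and `P` as truncation to `n ≥ 0`. Three identities then combine:
`T_g T_z h = T_z T_g h + ⟪V H_g 1, h⟫ • 1`, since the two sides differ only in the coefficient
of `z⁰`, which is the `(-1)`-st coefficient of `g h`; `T_{z̄} T_φ T_z = T_φ`; and
`T_{z̄} T_f 1 = V H_{f̄} 1`, which follows from `V (I - P) = P V` and `V M_{f̄} = M_f V`.
Substituting the first into `T_{z̄} T_f T_g T_z h` and applying the other two gives
`T_f T_g h + ⟪V H_g 1, h⟫ • V H_{f̄} 1`.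
-/

open MeasureTheory Complex AddCircle
open scoped ENNReal ComplexConjugate InnerProductSpace

noncomputable section

namespace ToeplitzProj

instance : Fact (0 < 2 * Real.pi) := ⟨by positivity⟩
instance : Fact ((1:ℝ≥0∞) ≤ ⊤) := ⟨le_top⟩

abbrev 𝕋 : Type := AddCircle (2 * Real.pi)
abbrev μT : Measure 𝕋 := haarAddCircle
abbrev L2 : Type := Lp ℂ 2 μT
abbrev Linf : Type := Lp ℂ ⊤ μT

/-- The rank-one operator `f ⊗ g`, acting by `h ↦ ⟨h, g⟩ f = ⟪g, h⟫ • f`. -/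
def rankOne {H : Type*} [NormedAddCommGroup H] [InnerProductSpace ℂ H] (f g : H) :
    H →L[ℂ] H := (innerSL ℂ g).smulRight f

theorem memLp_conj (h : L2) : MemLp (fun x => conj ((h : 𝕋 → ℂ) x)) 2 μT :=
  ⟨RCLike.continuous_conj.comp_aestronglyMeasurable (Lp.memLp h).1,
    by
      rw [show (fun x => conj ((h : 𝕋 → ℂ) x)) = conj (h : 𝕋 → ℂ) from rfl, eLpNorm_conj]
      exact (Lp.memLp h).2⟩

/-- Pointwise complex conjugation on `L²`. -/
def conjL2 (h : L2) : L2 := (memLp_conj h).toLp _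

theorem memLp_mul (φ : Linf) (f : L2) :
    MemLp ((φ : 𝕋 → ℂ) • (f : 𝕋 → ℂ)) 2 μT :=
  (Lp.memLp f).smul (Lp.memLp φ)

/-- Multiplication by an `L^∞` function, as a bounded operator on `L²`. -/
def mulCLM (φ : Linf) : L2 →L[ℂ] L2 :=
  LinearMap.mkContinuous
    { toFun := fun f => (memLp_mul φ f).toLp _
      map_add' := by
        intro f g
        rw [← MemLp.toLp_add (memLp_mul φ f) (memLp_mul φ g)]
        apply MemLp.toLp_congr
        filter_upwards [Lp.coeFn_add f g] with x hx
        simp only [Pi.smul_apply, smul_eq_mul, Pi.mul_apply, hx, Pi.add_apply, mul_add]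
      map_smul' := by
        intro c f
        show (memLp_mul φ (c • f)).toLp _ = c • (memLp_mul φ f).toLp _
        rw [← MemLp.toLp_const_smul c (memLp_mul φ f)]
        apply MemLp.toLp_congr
        filter_upwards [Lp.coeFn_smul c f] with x hx
        simp only [Pi.smul_apply, smul_eq_mul, Pi.mul_apply, hx]
        ring }
    ‖φ‖
    (by
      intro f
      simp only [LinearMap.coe_mk, AddHom.coe_mk]
      rw [Lp.norm_toLp]
      have h := eLpNorm_smul_le_mul_eLpNorm (p := ⊤) (q := 2) (r := 2)
        (Lp.memLp f).1 (Lp.memLp φ).1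
      calc (eLpNorm ((φ : 𝕋 → ℂ) • (f : 𝕋 → ℂ)) 2 μT).toReal
          ≤ (eLpNorm (φ : 𝕋 → ℂ) ⊤ μT * eLpNorm (f : 𝕋 → ℂ) 2 μT).toReal := by
            exact ENNReal.toReal_mono (by
              exact ENNReal.mul_ne_top (Lp.memLp φ).2.ne (Lp.memLp f).2.ne) h
        _ = ‖φ‖ * ‖f‖ := by
            rw [ENNReal.toReal_mul, Lp.norm_def, Lp.norm_def])

/-- The Hardy space `H²` as a subspace of `L²`: the functions whose negative Fourier
coefficients vanish. -/
def Hardy : Submodule ℂ L2 where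
  carrier := {f : L2 | ∀ n : ℤ, n < 0 → ⟪(fourierLp 2 n : L2), f⟫_ℂ = 0}
  add_mem' := by
    intro a b ha hb n hn
    rw [inner_add_right, ha n hn, hb n hn, add_zero]
  zero_mem' := by
    intro n hn
    exact inner_zero_right _
  smul_mem' := by
    intro c a ha n hn
    rw [inner_smul_right, ha n hn, mul_zero]

theorem isClosed_Hardy : IsClosed (Hardy : Set L2) := by
  have : (Hardy : Set L2)
      = ⋂ n : ℤ, ⋂ _ : n < 0, {f : L2 | ⟪(fourierLp 2 n : L2), f⟫_ℂ = 0} := by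
    ext f
    simp only [Set.mem_iInter, Set.mem_setOf_eq, SetLike.mem_coe]
    exact Iff.rfl
  rw [this]
  exact isClosed_iInter fun n => isClosed_iInter fun _ =>
    isClosed_eq (Continuous.inner continuous_const continuous_id) continuous_const

instance : CompleteSpace Hardy := isClosed_Hardy.completeSpace_coe

/-- Inclusion of the Hardy space into `L²`. -/
def inclH : Hardy →L[ℂ] L2 := Hardy.subtypeL

/-- The Riesz projection `P : L² → H²`. -/
def projH : L2 →L[ℂ] Hardy := Hardy.orthogonalProjectionOnto

/-- The Riesz projection, viewed as an operator `L² → L²`. -/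
def PFull : L2 →L[ℂ] L2 := inclH ∘L projH

/-- The Toeplitz operator `T_φ f = P(φ f)` on the Hardy space. -/
def Toep (φ : Linf) : Hardy →L[ℂ] Hardy := projH ∘L mulCLM φ ∘L inclH

/-- The Hankel operator `H_φ f = (I − P)(φ f)`, mapping `H²` into `L²`. -/
def Hank (φ : Linf) : Hardy →L[ℂ] L2 := (mulCLM φ ∘L inclH) - (inclH ∘L Toep φ)

/-- A continuous map on the circle, as an element of `L^∞`. -/
def cLinf (g : C(𝕋, ℂ)) : Linf := ContinuousMap.toLp (E := ℂ) ⊤ μT ℂ g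

/-- The coordinate function `z = e^{ix}` in `L^∞`. -/
def zL : Linf := cLinf (fourier 1)

/-- The conjugate coordinate function `z̄ = e^{-ix}` in `L^∞`. -/
def zbarL : Linf := cLinf (fourier (-1))

/-- The constant function `c` in `L^∞`. -/
def constL (c : ℂ) : Linf := cLinf (ContinuousMap.const _ c)

/-- An `L^∞` function, viewed as an element of `L²` (the measure is finite). -/
def toL2 (φ : Linf) : L2 :=
  ((Lp.memLp φ).mono_exponent (le_top : (2:ℝ≥0∞) ≤ ⊤)).toLp φ

/-- The constant function `1`, as an element of the Hardy space. -/
def oneH : Hardy :=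
  ⟨(fourierLp 2 0 : L2), fun n hn => orthonormal_fourier.2 (show n ≠ 0 from hn.ne)⟩

/-- The anti-unitary operator `V` on `L²`, `(Vh)(w) = w̄ · conj (h w)`. -/
def Vop (h : L2) : L2 := mulCLM zbarL (conjL2 h)

/-- `φ ∈ L^∞` is an inner function: `φ ∈ H²` and `|φ| = 1` a.e. -/
def IsInnerFn (u : Linf) : Prop :=
  toL2 u ∈ Hardy ∧ ∀ᵐ x ∂μT, ‖(u : 𝕋 → ℂ) x‖ = 1

/-- `φ ∈ L^∞` is nonconstant (as an a.e. class). -/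
def Nonconst (u : Linf) : Prop := ¬ ∃ c : ℂ, (u : 𝕋 → ℂ) =ᵐ[μT] fun _ => c

/-- `Q` is an orthogonal projection: self-adjoint and idempotent. -/
def IsOrthoProj {H : Type*} [NormedAddCommGroup H] [InnerProductSpace ℂ H]
    [CompleteSpace H] (Q : H →L[ℂ] H) : Prop :=
  IsSelfAdjoint Q ∧ Q ∘L Q = Q

theorem memLinf_conj (φ : Linf) : MemLp (fun x => conj ((φ : 𝕋 → ℂ) x)) ⊤ μT :=
  ⟨RCLike.continuous_conj.comp_aestronglyMeasurable (Lp.memLp φ).1,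
    by
      rw [show (fun x => conj ((φ : 𝕋 → ℂ) x)) = conj (φ : 𝕋 → ℂ) from rfl, eLpNorm_conj]
      exact (Lp.memLp φ).2⟩

/-- Pointwise complex conjugation on `L^∞`. -/
def conjLinf (φ : Linf) : Linf := (memLinf_conj φ).toLp _

/-- The pointwise product of two `L^∞` functions. -/
def mulLinf (φ ψ : Linf) : Linf :=
  (((Lp.memLp ψ).smul (Lp.memLp φ)) :
    MemLp ((φ : 𝕋 → ℂ) • (ψ : 𝕋 → ℂ)) ⊤ μT).toLp _

/-- The Hankel operator `H_φ = (I − P) M_φ P`, as an operator on all of `L²`. -/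
def HankFull (φ : Linf) : L2 →L[ℂ] L2 := (1 - PFull) ∘L mulCLM φ ∘L PFull

def coeff (n : ℤ) : L2 →L[ℂ] ℂ := innerSL ℂ (fourierLp 2 n : L2)

theorem coeff_apply (n : ℤ) (a : L2) : coeff n a = ⟪(fourierLp 2 n : L2), a⟫_ℂ := rfl

theorem coeff_eq_integral (n : ℤ) (a : L2) :
    coeff n a = ∫ x, fourier (-n) x * (a : 𝕋 → ℂ) x ∂μT := by
  rw [coeff_apply, ← coe_fourierBasis, ← HilbertBasis.repr_apply_apply, fourierBasis_repr]
  rfl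

theorem ext_coeff {a b : L2} (h : ∀ n, coeff n a = coeff n b) : a = b :=
  fourierBasis.repr.injective <| lp.ext <| funext fun n => by
    simpa [HilbertBasis.repr_apply_apply, coeff_apply] using h n

theorem coeff_fourierLp (m n : ℤ) : coeff m (fourierLp 2 n : L2) = if m = n then 1 else 0 :=
  orthonormal_iff_ite.mp orthonormal_fourier m n

theorem coeff_PFull (n : ℤ) (a : L2) :
    coeff n (PFull a) = if 0 ≤ n then coeff n a else 0 := by
  split_ifs with hn
  · have hperp : ⟪a - PFull a, (fourierLp 2 n : L2)⟫_ℂ = 0 :=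
      Hardy.starProjection_inner_eq_zero a _ fun m hm => orthonormal_fourier.2 (by omega)
    rw [inner_eq_zero_symm, inner_sub_right, sub_eq_zero] at hperp
    exact hperp.symm
  · exact (projH a).2 n (not_le.mp hn)

theorem inner_PFull_left {a b : L2} (hb : b ∈ Hardy) : ⟪PFull a, b⟫_ℂ = ⟪a, b⟫_ℂ := by
  have hperp := Hardy.starProjection_inner_eq_zero a b hb
  rw [inner_sub_left, sub_eq_zero] at hperp
  exact hperp.symm

theorem coeFn_cLinf (u : C(𝕋, ℂ)) : (cLinf u : 𝕋 → ℂ) =ᵐ[μT] u :=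
  ContinuousMap.coeFn_toLp (p := ⊤) (μ := μT) (𝕜 := ℂ) u

theorem coeFn_mulCLM (φ : Linf) (a : L2) :
    (mulCLM φ a : 𝕋 → ℂ) =ᵐ[μT] fun x => (φ : 𝕋 → ℂ) x * (a : 𝕋 → ℂ) x :=
  (memLp_mul φ a).coeFn_toLp

theorem mulCLM_comm (φ ψ : Linf) (a : L2) : mulCLM φ (mulCLM ψ a) = mulCLM ψ (mulCLM φ a) := by
  apply Lp.ext
  filter_upwards [coeFn_mulCLM φ (mulCLM ψ a), coeFn_mulCLM ψ a,
    coeFn_mulCLM ψ (mulCLM φ a), coeFn_mulCLM φ a] with x h₁ h₂ h₃ h₄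
  rw [h₁, h₂, h₃, h₄, mul_left_comm]

theorem coeff_mulCLM_fourier (k n : ℤ) (a : L2) :
    coeff n (mulCLM (cLinf (fourier k)) a) = coeff (n - k) a := by
  rw [coeff_eq_integral, coeff_eq_integral]
  refine integral_congr_ae ?_
  filter_upwards [coeFn_mulCLM (cLinf (fourier k)) a, coeFn_cLinf (fourier k)] with x h₁ h₂
  rw [h₁, h₂, ← mul_assoc, ← fourier_add, neg_sub, sub_eq_neg_add]

theorem coeff_mulCLM_zL (n : ℤ) (a : L2) : coeff n (mulCLM zL a) = coeff (n - 1) a :=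
  coeff_mulCLM_fourier 1 n a

theorem coeff_mulCLM_zbarL (n : ℤ) (a : L2) : coeff n (mulCLM zbarL a) = coeff (n + 1) a := by
  rw [zbarL, coeff_mulCLM_fourier, sub_neg_eq_add]

theorem coeFn_Vop (a : L2) :
    (Vop a : 𝕋 → ℂ) =ᵐ[μT] fun x => fourier (-1) x * conj ((a : 𝕋 → ℂ) x) := by
  filter_upwards [coeFn_mulCLM zbarL (conjL2 a), coeFn_cLinf (fourier (-1)),
    (memLp_conj a).coeFn_toLp] with x h₁ h₂ h₃
  rw [Vop, h₁, zbarL, h₂, conjL2, h₃]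

theorem coeff_Vop (n : ℤ) (a : L2) : coeff n (Vop a) = conj (coeff (-n - 1) a) := by
  rw [coeff_eq_integral, coeff_eq_integral, ← integral_conj]
  refine integral_congr_ae ?_
  filter_upwards [coeFn_Vop a] with x hx
  rw [hx, ← mul_assoc, ← fourier_add, map_mul, ← fourier_neg]
  ring_nf

theorem Vop_sub_PFull (a : L2) : Vop (a - PFull a) = PFull (Vop a) := by
  refine ext_coeff fun n => ?_
  rw [coeff_Vop, coeff_PFull, coeff_Vop, map_sub, coeff_PFull]
  split_ifs <;> first | omega | simp

theorem Vop_mulCLM_conjLinf (φ : Linf) (a : L2) :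
    Vop (mulCLM (conjLinf φ) a) = mulCLM φ (Vop a) := by
  apply Lp.ext
  filter_upwards [coeFn_Vop (mulCLM (conjLinf φ) a), coeFn_mulCLM (conjLinf φ) a,
    (memLinf_conj φ).coeFn_toLp, coeFn_mulCLM φ (Vop a), coeFn_Vop a] with x h₁ h₂ h₃ h₄ h₅
  rw [h₁, h₂, conjLinf, h₃, h₄, h₅, map_mul, Complex.conj_conj, mul_left_comm]

theorem Vop_oneH : Vop oneH = mulCLM zbarL oneH := by
  apply Lp.ext
  filter_upwards [coeFn_Vop oneH, coeFn_mulCLM zbarL oneH, coeFn_cLinf (fourier (-1)),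
    coeFn_fourierLp (T := 2 * Real.pi) 2 0] with x h₁ h₂ h₃ h₄
  rw [h₁, h₂, zbarL, h₃, oneH, h₄, fourier_zero, map_one]

theorem coe_Toep (φ : Linf) (k : Hardy) : (Toep φ k : L2) = PFull (mulCLM φ k) := rfl

theorem Hank_apply (φ : Linf) (k : Hardy) : Hank φ k = mulCLM φ k - PFull (mulCLM φ k) := rfl

theorem coeff_Toep (φ : Linf) (k : Hardy) (n : ℤ) :
    coeff n (Toep φ k : L2) = if 0 ≤ n then coeff n (mulCLM φ k) else 0 :=
  coeff_PFull n _

theorem coe_Toep_zL (k : Hardy) : (Toep zL k : L2) = mulCLM zL k := by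
  refine ext_coeff fun n => ?_
  rw [coeff_Toep, coeff_mulCLM_zL]
  split_ifs with hn
  · rfl
  · exact (k.2 (n - 1) (by omega)).symm

theorem PFull_mulCLM_zbarL_PFull (a : L2) :
    PFull (mulCLM zbarL (PFull a)) = PFull (mulCLM zbarL a) := by
  refine ext_coeff fun n => ?_
  rw [coeff_PFull, coeff_PFull, coeff_mulCLM_zbarL, coeff_mulCLM_zbarL, coeff_PFull]
  split_ifs <;> first | omega | rfl

theorem Toep_zbarL_Toep_Toep_zL (φ : Linf) (k : Hardy) :
    Toep zbarL (Toep φ (Toep zL k)) = Toep φ k := by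
  refine Subtype.ext <| ext_coeff fun n => ?_
  rw [coeff_Toep, coeff_Toep, coeff_mulCLM_zbarL, coeff_Toep, coe_Toep_zL, mulCLM_comm,
    coeff_mulCLM_zL, add_sub_cancel_right]
  split_ifs <;> first | omega | rfl

theorem Toep_Toep_zL (φ : Linf) (k : Hardy) :
    Toep φ (Toep zL k) = Toep zL (Toep φ k) + coeff (-1) (mulCLM φ k) • oneH := by
  refine Subtype.ext <| ext_coeff fun n => ?_
  rw [Submodule.coe_add, Submodule.coe_smul, map_add, map_smul, coeff_Toep, coe_Toep_zL,
    coe_Toep_zL, mulCLM_comm, coeff_mulCLM_zL, coeff_mulCLM_zL, coeff_Toep, oneH,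
    coeff_fourierLp]
  rcases lt_trichotomy n 0 with hn | rfl | hn
  · rw [if_neg (by omega), if_neg (by omega), if_neg (by omega), smul_zero, add_zero]
  · simp
  · rw [if_pos hn.le, if_pos (by omega), if_neg hn.ne', smul_zero, add_zero]

theorem inner_Vop_Hank_oneH (φ : Linf) {b : L2} (hb : b ∈ Hardy) :
    ⟪Vop (Hank φ oneH), b⟫_ℂ = coeff (-1) (mulCLM φ b) := by
  rw [Hank_apply, Vop_sub_PFull, inner_PFull_left hb, MeasureTheory.L2.inner_def,
    coeff_eq_integral]
  refine integral_congr_ae ?_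
  filter_upwards [coeFn_Vop (mulCLM φ oneH), coeFn_mulCLM φ oneH, coeFn_mulCLM φ b,
    coeFn_fourierLp (T := 2 * Real.pi) 2 0] with x h₁ h₂ h₃ h₄
  rw [RCLike.inner_apply', h₁, h₂, h₃, oneH, h₄, fourier_zero, mul_one, map_mul,
    Complex.conj_conj, ← fourier_neg, mul_assoc]

theorem coe_Toep_zbarL_Toep_oneH (φ : Linf) :
    (Toep zbarL (Toep φ oneH) : L2) = Vop (Hank (conjLinf φ) oneH) := by
  rw [Hank_apply, Vop_sub_PFull, Vop_mulCLM_conjLinf, Vop_oneH, mulCLM_comm, coe_Toep,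
    coe_Toep, PFull_mulCLM_zbarL_PFull]

/-- `T_{z̄} T_f T_g T_z − T_f T_g` is the rank-one operator `(V H_{f̄} 1) ⊗ (V H_g 1)`. -/
theorem toeplitz_conj_shift_sub_eq_rankOne (f g : Linf) (h : Hardy) :
    ((((Toep zbarL ∘L (Toep f ∘L (Toep g ∘L Toep zL))) - Toep f ∘L Toep g) h : Hardy) : L2)
      = ⟪Vop (Hank g oneH), (h : L2)⟫_ℂ • Vop (Hank (conjLinf f) oneH) := by
  change ((Toep zbarL (Toep f (Toep g (Toep zL h))) - Toep f (Toep g h) : Hardy) : L2) = _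
  rw [Toep_Toep_zL, map_add, map_add, map_smul, map_smul, Toep_zbarL_Toep_Toep_zL,
    add_sub_cancel_left, Submodule.coe_smul, coe_Toep_zbarL_Toep_oneH,
    inner_Vop_Hank_oneH g h.2]

end ToeplitzProj
end
end
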